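/- arXiv:2008.08291 — 8 statements merged into one kernel-verified Lean document; each statement's English description precedes it below -/
import Mathlib

section
/- Let A and B be real d×d matrices. Suppose A is symmetric positive definite and the product AB is skew-symmetric. Then every eigenvalue of A + B has positive real part; in particular, A + B is invertible. -/
/-!
If `(A + B) v = μ v` with `v ≠ 0`, apply `A` and pair with `v`:
`v* A² v + v* (AB) v = μ · v* A v`. Here `v* A² v = |A v|² > 0` and `v* A v > 0` are real, while
`v* (AB) v` is purely imaginary because `AB` is skew, so comparing real parts gives `Re μ > 0`.
A singular `A + B` would have the eigenvalue `0`.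
-/

open Matrix
open scoped ComplexOrder

namespace Matrix

variable {n : Type*} [Fintype n]

theorem re_star_dotProduct_mulVec_eq_zero {𝕜 : Type*} [RCLike 𝕜] {S : Matrix n n 𝕜}
    (hS : Sᴴ = -S) (v : n → 𝕜) : RCLike.re (star v ⬝ᵥ S *ᵥ v) = 0 := by
  have h : star v ⬝ᵥ S *ᵥ v = -star (star v ⬝ᵥ S *ᵥ v) := by
    conv_lhs => rw [star_dotProduct, star_mulVec, ← dotProduct_mulVec, hS, neg_mulVec,
      dotProduct_neg, star_neg]
  have := congrArg RCLike.re h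
  rw [map_neg, RCLike.star_def, RCLike.conj_re] at this
  linarith

theorem re_pos_of_mulVec_eq_smul {𝕜 : Type*} [RCLike 𝕜] [DecidableEq n] {A B : Matrix n n 𝕜}
    (hA : A.PosDef) (hAB : (A * B)ᴴ = -(A * B)) {μ : 𝕜} {v : n → 𝕜} (hv : v ≠ 0)
    (hμ : (A + B) *ᵥ v = μ • v) : 0 < RCLike.re μ := by
  have hAA : (A * A).PosDef := by
    simpa only [hA.1.eq] using
      PosDef.conjTranspose_mul_self A (mulVec_injective_iff_isUnit.2 hA.isUnit)
  have key : star v ⬝ᵥ (A * A) *ᵥ v + star v ⬝ᵥ (A * B) *ᵥ v = μ * (star v ⬝ᵥ A *ᵥ v) := by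
    rw [← dotProduct_add, ← add_mulVec, ← mul_add, ← mulVec_mulVec, hμ, mulVec_smul,
      dotProduct_smul, smul_eq_mul]
  obtain ⟨hq_re, hq_im⟩ := RCLike.pos_iff.1 (hA.dotProduct_mulVec_pos hv)
  have hre := congrArg RCLike.re key
  rw [map_add, re_star_dotProduct_mulVec_eq_zero hAB, add_zero, RCLike.mul_re, hq_im,
    mul_zero, sub_zero] at hre
  exact pos_of_mul_pos_left (hre ▸ hAA.re_dotProduct_pos hv) hq_re.le

theorem re_star_dotProduct_map_ofReal_mulVec (M : Matrix n n ℝ) (v : n → ℂ) :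
    (star v ⬝ᵥ M.map (↑) *ᵥ v).re =
      (Complex.re ∘ v) ⬝ᵥ M *ᵥ (Complex.re ∘ v) + (Complex.im ∘ v) ⬝ᵥ M *ᵥ (Complex.im ∘ v) := by
  simp only [dotProduct, mulVec, Pi.star_apply, map_apply, Function.comp_apply, Finset.mul_sum,
    Complex.re_sum, Complex.mul_re, Complex.mul_im, Complex.ofReal_re, Complex.ofReal_im,
    RCLike.star_def, Complex.conj_re, Complex.conj_im, ← Finset.sum_add_distrib]
  refine Finset.sum_congr rfl fun i _ => Finset.sum_congr rfl fun j _ => ?_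
  ring

theorem PosDef.map_ofReal {A : Matrix n n ℝ} (hA : A.PosDef) :
    (A.map (↑) : Matrix n n ℂ).PosDef := by
  have hA' : (A.map (↑) : Matrix n n ℂ).IsHermitian := hA.1.map _ fun _ => by simp
  refine .of_dotProduct_mulVec_pos hA' fun v hv => Complex.pos_iff.2
    ⟨?_, (hA'.im_star_dotProduct_mulVec_self v).symm⟩
  have hpos : ∀ x ≠ 0, 0 < x ⬝ᵥ A *ᵥ x := fun x hx => by
    simpa using hA.dotProduct_mulVec_pos hx
  have hnonneg : ∀ x, 0 ≤ x ⬝ᵥ A *ᵥ x := fun x => by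
    simpa using hA.posSemidef.dotProduct_mulVec_nonneg x
  rw [re_star_dotProduct_map_ofReal_mulVec]
  by_cases hre : Complex.re ∘ v = 0
  · have him : Complex.im ∘ v ≠ 0 := fun him =>
      hv (funext fun i => Complex.ext (congrFun hre i) (congrFun him i))
    linarith [hnonneg (Complex.re ∘ v), hpos _ him]
  · linarith [hpos _ hre, hnonneg (Complex.im ∘ v)]

theorem conjTranspose_map_ofReal_mul_eq_neg {A B : Matrix n n ℝ} (hAB : (A * B)ᵀ = -(A * B)) :
    (A.map (↑) * B.map (↑) : Matrix n n ℂ)ᴴ = -(A.map (↑) * B.map (↑)) := by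
  have hmul : (A * B).map (↑) = (A.map (↑) * B.map (↑) : Matrix n n ℂ) :=
    Matrix.map_mul (f := Complex.ofRealHom)
  rw [← hmul, ← conjTranspose_map _ fun _ => by simp, conjTranspose_eq_transpose_of_trivial, hAB,
    Matrix.map_neg _ Complex.ofReal_neg]

end Matrix

theorem stmt_0 (d : ℕ) (A B : Matrix (Fin d) (Fin d) ℝ)
    (hA : A.PosDef) (hAB : (A * B)ᵀ = -(A * B)) :
    (∀ (μ : ℂ) (v : Fin d → ℂ), v ≠ 0 →
      ((A + B).map (Complex.ofReal)).mulVec v = μ • v → 0 < μ.re) ∧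
    IsUnit (A + B).det := by
  have hsum : (A + B).map (↑) = (A.map (↑) + B.map (↑) : Matrix (Fin d) (Fin d) ℂ) :=
    Matrix.map_add _ Complex.ofReal_add A B
  have re_pos : ∀ (μ : ℂ) (v : Fin d → ℂ), v ≠ 0 →
      ((A + B).map (Complex.ofReal)).mulVec v = μ • v → 0 < μ.re := fun μ v hv hμ =>
    re_pos_of_mulVec_eq_smul hA.map_ofReal (conjTranspose_map_ofReal_mul_eq_neg hAB) hv
      (hsum ▸ hμ)
  refine ⟨re_pos, isUnit_iff_ne_zero.2 fun hdet => ?_⟩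
  have hdet' : ((A + B).map (↑) : Matrix (Fin d) (Fin d) ℂ).det = 0 := by
    rw [← Complex.ofReal_eq_zero] at hdet
    exact (Complex.ofRealHom.map_det (A + B)).symm.trans hdet
  obtain ⟨v, hv, hv0⟩ := exists_mulVec_eq_zero_iff.2 hdet'
  simpa using re_pos 0 v hv (by rw [hv0, zero_smul])
end

section
/- Let A and B be real d×d matrices. Suppose the symmetrization Aˢ = (A + Aᵀ)/2 is positive definite and B is symmetric, invertible, with exactly one negative eigenvalue. Then AB is invertible and has exactly one negative real eigenvalue, and the geometric multiplicity of that negative eigenvalue is 1. -/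
/-!
The form `x ↦ xᵀAx` is positive definite, so the segment from `1` to `A` stays among invertible
matrices and `det A > 0`; with `det B < 0` this gives `det (AB) < 0`, and since `det (t + AB)`
is a monic polynomial in `t`, `AB` has a negative eigenvalue.

If `ABv = μv` with `μ < 0`, then `0 < (Bv)ᵀA(Bv) = μ vᵀBv`, so `B` is negative definite on each
eigenspace of `AB` for a negative eigenvalue. Cauchy–Schwarz for the form of `A`, applied to
`Bv₁, Bv₂`, shows that `B` is also negative definite on the span of eigenvectors for two distinct
negative eigenvalues. But `vᵀBv ≥ 0` on the hyperplane orthogonal to the eigenvector of the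
negative eigenvalue of `B`, so `B` is negative definite on no plane.
-/

open Matrix Polynomial Filter Module

lemma quadratic_neg_of_discrim {μ₁ μ₂ p q r a b : ℝ} (hne : μ₁ ≠ μ₂) (hp : p < 0) (hr : r < 0)
    (hcs : ((μ₁ + μ₂) * q) ^ 2 ≤ 4 * (μ₁ * p) * (μ₂ * r)) (hab : a ≠ 0 ∨ b ≠ 0) :
    a ^ 2 * p + 2 * a * b * q + b ^ 2 * r < 0 := by
  have hμ : 4 * μ₁ * μ₂ < (μ₁ + μ₂) ^ 2 := by
    nlinarith [sq_pos_of_ne_zero (sub_ne_zero.2 hne)]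
  have hq : q ^ 2 < p * r := by
    have := mul_lt_mul_of_pos_right hμ (mul_pos_of_neg_of_neg hp hr)
    exact lt_of_mul_lt_mul_left (by linarith) (sq_nonneg (μ₁ + μ₂))
  rcases hab with ha | hb
  · nlinarith [sq_nonneg (a * q + b * r), sq_pos_of_ne_zero ha]
  · nlinarith [sq_nonneg (a * p + b * q), sq_pos_of_ne_zero hb]

section NegativeDirection

variable {V : Type*} [AddCommGroup V] [Module ℝ V] {Q : V → ℝ} (φ : V →ₗ[ℝ] ℝ)

lemma Submodule.finrank_le_one_of_forall_neg (hφ : ∀ v, φ v = 0 → 0 ≤ Q v) {W : Submodule ℝ V}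
    (hW : ∀ v ∈ W, v ≠ 0 → Q v < 0) : finrank ℝ W ≤ 1 := by
  have hinj : Function.Injective (φ ∘ₗ W.subtype) := by
    rw [← LinearMap.ker_eq_bot, Submodule.eq_bot_iff]
    rintro ⟨v, hv⟩ hφv
    by_contra h
    exact (hφ v hφv).not_gt (hW v hv (by simpa using h))
  simpa using LinearMap.finrank_le_finrank_of_injective hinj

lemma not_forall_neg_of_pair (hφ : ∀ v, φ v = 0 → 0 ≤ Q v) (v₁ v₂ : V) :
    ¬ ∀ a b : ℝ, a ≠ 0 ∨ b ≠ 0 → Q (a • v₁ + b • v₂) < 0 := fun h => by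
  have hφ₁ : φ v₁ ≠ 0 := fun h₀ => (hφ v₁ h₀).not_gt (by simpa using h 1 0 (.inl one_ne_zero))
  refine (hφ (φ v₂ • v₁ + -φ v₁ • v₂) ?_).not_gt (h _ _ (.inr (neg_ne_zero.2 hφ₁)))
  simp only [map_add, map_smul, smul_eq_mul]
  ring

end NegativeDirection

namespace Matrix

variable {n : Type*} [Fintype n]

lemma IsSymm.dotProduct_mulVec_comm {B : Matrix n n ℝ} (hB : B.IsSymm) (x y : n → ℝ) :
    x ⬝ᵥ B *ᵥ y = y ⬝ᵥ B *ᵥ x := by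
  conv_lhs => rw [← hB.eq]
  exact dotProduct_transpose_mulVec B x y

lemma dotProduct_mulVec_pos_of_posDef_symmPart {A : Matrix n n ℝ}
    (hA : (((1 : ℝ) / 2) • (A + Aᵀ)).PosDef) {x : n → ℝ} (hx : x ≠ 0) :
    0 < x ⬝ᵥ A *ᵥ x := by
  have h := hA.dotProduct_mulVec_pos hx
  rwa [star_trivial, smul_mulVec, add_mulVec, dotProduct_smul, dotProduct_add,
    dotProduct_transpose_mulVec, smul_eq_mul, ← two_mul, ← mul_assoc, one_div,
    inv_mul_cancel₀ two_ne_zero, one_mul] at h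

lemma sq_add_le_of_dotProduct_mulVec_nonneg {A : Matrix n n ℝ}
    (hA : ∀ x, 0 ≤ x ⬝ᵥ A *ᵥ x) (x y : n → ℝ) :
    (x ⬝ᵥ A *ᵥ y + y ⬝ᵥ A *ᵥ x) ^ 2 ≤ 4 * (x ⬝ᵥ A *ᵥ x) * (y ⬝ᵥ A *ᵥ y) := by
  have h := discrim_le_zero (a := y ⬝ᵥ A *ᵥ y) (b := x ⬝ᵥ A *ᵥ y + y ⬝ᵥ A *ᵥ x)
    (c := x ⬝ᵥ A *ᵥ x) fun t => by
      have := hA (x + t • y)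
      simp only [add_dotProduct, dotProduct_add, mulVec_add, mulVec_smul, smul_dotProduct,
        dotProduct_smul, smul_eq_mul] at this
      linarith
  rw [discrim] at h
  linarith

variable [DecidableEq n]

lemma det_ne_zero_of_dotProduct_mulVec_pos {A : Matrix n n ℝ}
    (hA : ∀ x ≠ 0, 0 < x ⬝ᵥ A *ᵥ x) : A.det ≠ 0 := fun h => by
  obtain ⟨x, hx, hAx⟩ := exists_mulVec_eq_zero_iff.2 h
  simpa [hAx] using hA x hx

lemma det_pos_of_dotProduct_mulVec_pos {A : Matrix n n ℝ}
    (hA : ∀ x ≠ 0, 0 < x ⬝ᵥ A *ᵥ x) : 0 < A.det := by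
  set M : ℝ → Matrix n n ℝ := fun t => (1 - t) • 1 + t • A
  have hM : ∀ t ∈ Set.Icc (0 : ℝ) 1, (M t).det ≠ 0 := fun t ht =>
    det_ne_zero_of_dotProduct_mulVec_pos fun x hx => by
      have hxx : 0 < x ⬝ᵥ x := by simpa using dotProduct_star_self_pos_iff.2 hx
      have := hA x hx
      simp only [M, add_mulVec, smul_mulVec, one_mulVec, dotProduct_add, dotProduct_smul,
        smul_eq_mul]
      rcases ht.2.eq_or_lt with rfl | ht1
      · simpa
      · nlinarith [ht.1]
  have hcont : ContinuousOn (fun t => (M t).det) (Set.Icc 0 1) :=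
    (Continuous.matrix_det (by fun_prop)).continuousOn
  by_contra! hle
  obtain ⟨t, ht, h0⟩ := intermediate_value_Icc' zero_le_one hcont
    ⟨by simpa [M] using hle, by simp [M]⟩
  exact hM t ht h0

lemma exists_neg_hasEigenvalue_of_det_neg {M : Matrix n n ℝ} (hM : M.det < 0) :
    ∃ μ : ℝ, μ < 0 ∧ Module.End.HasEigenvalue (toLin' M) μ := by
  have hn : Nonempty n := not_isEmpty_iff.1 fun _ => by norm_num [det_isEmpty] at hM
  set p := (-M).charpoly
  have hp : ∀ t, p.eval t = (scalar n t + M).det := fun t => by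
    rw [eval_charpoly, sub_neg_eq_add]
  have htop : Tendsto p.eval atTop atTop := p.tendsto_atTop_of_leadingCoeff_nonneg
    (by rw [charpoly_degree_eq_dim]; exact_mod_cast Fintype.card_pos)
    (by rw [(charpoly_monic _).leadingCoeff]; exact zero_le_one)
  obtain ⟨T, hT, hT0⟩ := ((htop.eventually_ge_atTop 0).and (eventually_ge_atTop 0)).exists
  obtain ⟨t, ht, hpt : p.eval t = 0⟩ := intermediate_value_Icc hT0 p.continuous.continuousOn
    ⟨by rw [hp, map_zero, zero_add]; exact hM.le, hT⟩
  have ht0 : t ≠ 0 := by rintro rfl; exact hM.ne (by simpa [hp] using hpt)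
  refine ⟨-t, neg_neg_of_pos (ht.1.lt_of_ne' ht0), ?_⟩
  rw [Module.End.hasEigenvalue_iff_isRoot_charpoly, charpoly_toLin', IsRoot,
    eval_charpoly, map_neg, ← neg_add', det_neg, ← hp, hpt, mul_zero]

lemma IsHermitian.dotProduct_mulVec_self_eq_sum {B : Matrix n n ℝ} (hB : B.IsHermitian)
    (v : n → ℝ) :
    v ⬝ᵥ B *ᵥ v = ∑ i, hB.eigenvalues i * (⇑(hB.eigenvectorBasis i) ⬝ᵥ v) ^ 2 := by
  have h := hB.eigenvectorBasis.sum_inner_mul_inner (WithLp.toLp 2 v) (WithLp.toLp 2 (B *ᵥ v))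
  simp only [EuclideanSpace.inner_eq_star_dotProduct, star_trivial] at h
  rw [dotProduct_comm, ← h]
  refine Finset.sum_congr rfl fun i _ => ?_
  rw [dotProduct_comm (B *ᵥ v), (isHermitian_iff_isSymm.1 hB).dotProduct_mulVec_comm,
    hB.mulVec_eigenvectorBasis, dotProduct_smul, smul_eq_mul, dotProduct_comm v]
  ring

lemma IsHermitian.dotProduct_mulVec_self_nonneg_of_dotProduct_eq_zero {B : Matrix n n ℝ}
    (hB : B.IsHermitian) {i₀ : n} (hB₀ : ∀ i ≠ i₀, 0 ≤ hB.eigenvalues i) {v : n → ℝ}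
    (hv : ⇑(hB.eigenvectorBasis i₀) ⬝ᵥ v = 0) : 0 ≤ v ⬝ᵥ B *ᵥ v := by
  rw [hB.dotProduct_mulVec_self_eq_sum]
  refine Finset.sum_nonneg fun i _ => ?_
  rcases eq_or_ne i i₀ with rfl | hi
  · simp [hv]
  · exact mul_nonneg (hB₀ i hi) (sq_nonneg _)

lemma IsHermitian.det_nonpos_of_eigenvalues_nonneg_of_ne {B : Matrix n n ℝ}
    (hB : B.IsHermitian) {i₀ : n} (hi₀ : hB.eigenvalues i₀ ≤ 0)
    (hB₀ : ∀ i ≠ i₀, 0 ≤ hB.eigenvalues i) : B.det ≤ 0 := by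
  rw [hB.det_eq_prod_eigenvalues, ← Finset.mul_prod_erase _ _ (Finset.mem_univ i₀)]
  exact mul_nonpos_of_nonpos_of_nonneg (by simpa using hi₀)
    (Finset.prod_nonneg fun i hi => by simpa using hB₀ i (Finset.ne_of_mem_erase hi))

section Product

variable {A B : Matrix n n ℝ}

lemma dotProduct_mulVec_self_neg_of_mem_eigenspace_mul (hA : ∀ x ≠ 0, 0 < x ⬝ᵥ A *ᵥ x)
    {μ : ℝ} (hμ : μ < 0) {v : n → ℝ} (hv : v ∈ Module.End.eigenspace (toLin' (A * B)) μ)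
    (hv₀ : v ≠ 0) : v ⬝ᵥ B *ᵥ v < 0 := by
  rw [Module.End.mem_eigenspace_iff, toLin'_apply, ← mulVec_mulVec] at hv
  have hBv : B *ᵥ v ≠ 0 := fun h => hv₀ <| by simpa [h, hμ.ne] using hv.symm
  have h := hA _ hBv
  rw [hv, dotProduct_smul, smul_eq_mul, dotProduct_comm] at h
  exact neg_of_mul_pos_right h hμ.le

lemma dotProduct_mulVec_self_neg_of_mem_eigenspace_mul_pair (hA : ∀ x ≠ 0, 0 < x ⬝ᵥ A *ᵥ x)
    (hB : B.IsSymm) {μ₁ μ₂ : ℝ} (hμ₁ : μ₁ < 0) (hμ₂ : μ₂ < 0) (hne : μ₁ ≠ μ₂) {v₁ v₂ : n → ℝ}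
    (hv₁ : v₁ ∈ Module.End.eigenspace (toLin' (A * B)) μ₁) (hv₁₀ : v₁ ≠ 0)
    (hv₂ : v₂ ∈ Module.End.eigenspace (toLin' (A * B)) μ₂) (hv₂₀ : v₂ ≠ 0) {a b : ℝ}
    (hab : a ≠ 0 ∨ b ≠ 0) :
    (a • v₁ + b • v₂) ⬝ᵥ B *ᵥ (a • v₁ + b • v₂) < 0 := by
  have hp := dotProduct_mulVec_self_neg_of_mem_eigenspace_mul hA hμ₁ hv₁ hv₁₀
  have hr := dotProduct_mulVec_self_neg_of_mem_eigenspace_mul hA hμ₂ hv₂ hv₂₀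
  have hcs := sq_add_le_of_dotProduct_mulVec_nonneg
    (fun x => (eq_or_ne x 0).elim (fun h => by simp [h]) fun h => (hA x h).le) (B *ᵥ v₁) (B *ᵥ v₂)
  have hform : ∀ {x y : n → ℝ} {μ : ℝ}, y ∈ Module.End.eigenspace (toLin' (A * B)) μ →
      (B *ᵥ x) ⬝ᵥ A *ᵥ (B *ᵥ y) = μ * (x ⬝ᵥ B *ᵥ y) := fun hy => by
    rw [Module.End.mem_eigenspace_iff, toLin'_apply, ← mulVec_mulVec] at hy
    rw [hy, dotProduct_smul, dotProduct_comm, hB.dotProduct_mulVec_comm, smul_eq_mul]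
  rw [hform hv₁, hform hv₂, hform hv₁, hform hv₂, hB.dotProduct_mulVec_comm v₂] at hcs
  have := quadratic_neg_of_discrim (q := v₁ ⬝ᵥ B *ᵥ v₂) hne hp hr (by linear_combination hcs) hab
  simp only [add_dotProduct, dotProduct_add, mulVec_add, mulVec_smul, smul_dotProduct,
    dotProduct_smul, smul_eq_mul, hB.dotProduct_mulVec_comm v₂ v₁]
  linear_combination this

end Product

end Matrix

theorem stmt_1 (d : ℕ) (A B : Matrix (Fin d) (Fin d) ℝ)
    (hAs : (((1 : ℝ)/2) • (A + Aᵀ)).PosDef)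
    (hB : B.IsHermitian) (hBinv : IsUnit B.det)
    (hBneg : (Finset.univ.filter (fun i => hB.eigenvalues i < 0)).card = 1) :
    IsUnit (A * B).det ∧
    (∃! μ : ℝ, μ < 0 ∧ Module.End.HasEigenvalue (Matrix.toLin' (A * B)) μ) ∧
    (∀ μ : ℝ, μ < 0 → Module.End.HasEigenvalue (Matrix.toLin' (A * B)) μ →
      Module.finrank ℝ (Module.End.eigenspace (Matrix.toLin' (A * B)) μ) = 1) := by
  have hA : ∀ x ≠ 0, 0 < x ⬝ᵥ A *ᵥ x := fun x => dotProduct_mulVec_pos_of_posDef_symmPart hAs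
  obtain ⟨i₀, hi₀, huniq⟩ := (Fintype.existsUnique_iff_card_one _).2 hBneg
  have hB₀ : ∀ i ≠ i₀, 0 ≤ hB.eigenvalues i := fun i hi => not_lt.1 fun h => hi (huniq i h)
  have hdet : (A * B).det < 0 := by
    rw [det_mul]
    exact mul_neg_of_pos_of_neg (det_pos_of_dotProduct_mulVec_pos hA)
      ((hB.det_nonpos_of_eigenvalues_nonneg_of_ne hi₀.le hB₀).lt_of_ne hBinv.ne_zero)
  set φ := dotProductBilin ℝ ℝ ⇑(hB.eigenvectorBasis i₀)
  have hφ : ∀ v, φ v = 0 → 0 ≤ v ⬝ᵥ B *ᵥ v := fun v =>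
    hB.dotProduct_mulVec_self_nonneg_of_dotProduct_eq_zero hB₀
  obtain ⟨μ, hμ, hμA⟩ := exists_neg_hasEigenvalue_of_det_neg hdet
  refine ⟨hdet.ne.isUnit, ⟨μ, ⟨hμ, hμA⟩, fun ν ⟨hν, hνA⟩ => ?_⟩, fun ν hν hνA => ?_⟩
  · by_contra hne
    obtain ⟨v₁, hv₁, hv₁₀⟩ := hνA.exists_hasEigenvector
    obtain ⟨v₂, hv₂, hv₂₀⟩ := hμA.exists_hasEigenvector
    exact not_forall_neg_of_pair φ hφ v₁ v₂ fun a b =>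
      dotProduct_mulVec_self_neg_of_mem_eigenspace_mul_pair hA (isHermitian_iff_isSymm.1 hB)
        hν hμ hne hv₁ hv₁₀ hv₂ hv₂₀
  · refine le_antisymm (Submodule.finrank_le_one_of_forall_neg φ hφ fun v hv hv₀ =>
      dotProduct_mulVec_self_neg_of_mem_eigenspace_mul hA hν hv hv₀) ?_
    exact Submodule.one_le_finrank_iff.2 hνA
end

section
/- Let U ∈ C²(ℝᵈ) and ℓ ∈ C¹(ℝᵈ, ℝᵈ) satisfy ∇U·ℓ ≡ 0, and let c be a critical point of U with invertible Hessian H = ∇²U(c). Then the matrix H·L is skew-symmetric, where L = Dℓ(c) is the Jacobian of ℓ at c. -/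
/-!
Differentiating `⟪∇U, ℓ⟫ ≡ 0` once at `c`, where `∇U` vanishes, gives `⟪H v, ℓ c⟫ = 0` for all `v`,
so `ℓ c = 0` because `H` is onto. Both factors now vanish at `c`, so the quadratic term of
`⟪∇U, ℓ⟫` along any line through `c` gives `⟪H u, L u⟫ = 0`. Polarizing, `⟪H x, L y⟫` is
antisymmetric in `x, y`, and the symmetry of the Hessian turns this into `⟪H L x, y⟫ = -⟪x, H L y⟫`.
-/

open RealInnerProductSpace

section InnerProductVanishing

variable {E F : Type*} [NormedAddCommGroup E] [NormedSpace ℝ E]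
  [NormedAddCommGroup F] [InnerProductSpace ℝ F]

-- The slopes `t⁻¹ • f t` and `t⁻¹ • g t` stay orthogonal and tend to `a` and `b`.
theorem inner_eq_zero_of_hasDerivAt_of_forall_inner_eq_zero {f g : ℝ → F} {a b : F}
    (hf : HasDerivAt f a 0) (hg : HasDerivAt g b 0) (hf₀ : f 0 = 0) (hg₀ : g 0 = 0)
    (h : ∀ t, ⟪f t, g t⟫ = 0) : ⟪a, b⟫ = 0 := by
  have hlim := (hasDerivAt_iff_tendsto_slope.1 hf).inner (𝕜 := ℝ)
    (hasDerivAt_iff_tendsto_slope.1 hg)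
  have hslope : ∀ t, ⟪slope f 0 t, slope g 0 t⟫ = 0 := fun t => by
    simp only [slope_def_module, hf₀, hg₀, sub_zero, inner_smul_left, inner_smul_right, h,
      mul_zero]
  simp only [hslope] at hlim
  exact tendsto_nhds_unique hlim tendsto_const_nhds

theorem inner_fderiv_apply_self_eq_zero {f g : E → F} {f' g' : E →L[ℝ] F} {c : E}
    (hf : HasFDerivAt f f' c) (hg : HasFDerivAt g g' c) (hfc : f c = 0) (hgc : g c = 0)
    (h : ∀ x, ⟪f x, g x⟫ = 0) (u : E) : ⟪f' u, g' u⟫ = 0 := by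
  have hline : HasDerivAt (fun t : ℝ => c + t • u) u 0 := by
    simpa using ((hasDerivAt_id (0 : ℝ)).smul_const u).const_add c
  have hc : c + (0 : ℝ) • u = c := by simp
  rw [← hc] at hf hg
  exact inner_eq_zero_of_hasDerivAt_of_forall_inner_eq_zero (hf.comp_hasDerivAt 0 hline)
    (hg.comp_hasDerivAt 0 hline) (by simpa) (by simpa) (fun t => h _)

theorem eq_zero_of_forall_inner_eq_zero_of_surjective {f g : E → F} {f' : E →L[ℝ] F} {c : E}
    (hf : HasFDerivAt f f' c) (hf' : Function.Surjective f') (hg : DifferentiableAt ℝ g c)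
    (hfc : f c = 0) (h : ∀ x, ⟪f x, g x⟫ = 0) : g c = 0 := by
  have hderiv := hf.inner ℝ hg.hasFDerivAt
  rw [show (fun x => ⟪f x, g x⟫) = fun _ => (0 : ℝ) from funext h] at hderiv
  obtain ⟨v, hv⟩ := hf' (g c)
  have := congrArg (fun φ : E →L[ℝ] ℝ => φ v) ((hasFDerivAt_const 0 c).unique hderiv)
  simpa [hfc, hv, eq_comm] using this

theorem inner_apply_apply_eq_neg_of_forall_inner_apply_self_eq_zero {A B : E →L[ℝ] F}
    (h : ∀ u, ⟪A u, B u⟫ = 0) (x y : E) : ⟪A x, B y⟫ = -⟪A y, B x⟫ := by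
  have hxy := h (x + y)
  simp only [map_add, inner_add_left, inner_add_right, h x, h y] at hxy
  linarith

end InnerProductVanishing

section Hessian

variable {E : Type*} [NormedAddCommGroup E] [InnerProductSpace ℝ E] [CompleteSpace E]
  {U : E → ℝ}

theorem gradient_eq_toDual_symm_comp_fderiv :
    gradient U = (InnerProductSpace.toDual ℝ E).symm.toContinuousLinearEquiv ∘ fderiv ℝ U :=
  rfl

theorem ContDiff.gradient {n : WithTop ℕ∞} (hU : ContDiff ℝ (n + 1) U) :
    ContDiff ℝ n (gradient U) := by
  rw [gradient_eq_toDual_symm_comp_fderiv]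
  exact (ContinuousLinearEquiv.contDiff _).comp (hU.fderiv_right le_rfl)

theorem inner_fderiv_gradient_apply (c v w : E) :
    ⟪fderiv ℝ (gradient U) c v, w⟫ = fderiv ℝ (fderiv ℝ U) c v w := by
  rw [gradient_eq_toDual_symm_comp_fderiv, ContinuousLinearEquiv.comp_fderiv]
  simp [InnerProductSpace.toDual_symm_apply]

theorem inner_fderiv_gradient_comm {c : E} (hU : ContDiffAt ℝ 2 U c) (v w : E) :
    ⟪fderiv ℝ (gradient U) c v, w⟫ = ⟪v, fderiv ℝ (gradient U) c w⟫ := by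
  rw [real_inner_comm _ v, inner_fderiv_gradient_apply, inner_fderiv_gradient_apply]
  exact hU.isSymmSndFDerivAt (by simp) v w

end Hessian

theorem stmt_6 (d : ℕ)
    (U : EuclideanSpace ℝ (Fin d) → ℝ)
    (ℓ : EuclideanSpace ℝ (Fin d) → EuclideanSpace ℝ (Fin d))
    (hU : ContDiff ℝ 2 U) (hℓ : ContDiff ℝ 1 ℓ)
    (horth : ∀ x, ⟪gradient U x, ℓ x⟫ = (0 : ℝ))
    (c : EuclideanSpace ℝ (Fin d))
    (hc : gradient U c = 0)
    (hHess : Function.Bijective (fderiv ℝ (gradient U) c)) :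
    ∀ x y : EuclideanSpace ℝ (Fin d),
      ⟪fderiv ℝ (gradient U) c (fderiv ℝ ℓ c x), y⟫ =
        -⟪x, fderiv ℝ (gradient U) c (fderiv ℝ ℓ c y)⟫ := by
  intro x y
  set H := fderiv ℝ (gradient U) c
  set L := fderiv ℝ ℓ c
  have hH : HasFDerivAt (gradient U) H c :=
    ((ContDiff.gradient hU).differentiable one_ne_zero c).hasFDerivAt
  have hL : HasFDerivAt ℓ L c := (hℓ.differentiable one_ne_zero c).hasFDerivAt
  have hℓc : ℓ c = 0 :=
    eq_zero_of_forall_inner_eq_zero_of_surjective hH hHess.surjective hL.differentiableAt hc horth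
  have hskew := inner_apply_apply_eq_neg_of_forall_inner_apply_self_eq_zero
    (inner_fderiv_apply_self_eq_zero hH hL hc hℓc horth)
  calc ⟪H (L x), y⟫ = ⟪H y, L x⟫ := by
        rw [inner_fderiv_gradient_comm hU.contDiffAt, real_inner_comm]
    _ = -⟪H x, L y⟫ := hskew y x
    _ = -⟪x, H (L y)⟫ := by rw [inner_fderiv_gradient_comm hU.contDiffAt]
end

section
/- Let H be a real symmetric invertible d×d matrix and L a real d×d matrix with HL skew-symmetric. Suppose c is a real vector with (H + L)ᵀ positive definite in the sense that x·(H+L)x > 0 for all nonzero x. Then H itself is positive definite. -/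
open Matrix

namespace Matrix

variable {n R : Type*} [Fintype n]

theorem dotProduct_mulVec_self_eq_zero_of_transpose_eq_neg [CommRing R] [NoZeroDivisors R]
    [CharZero R] {A : Matrix n n R} (hA : Aᵀ = -A) (x : n → R) : x ⬝ᵥ A *ᵥ x = 0 := by
  refine CharZero.eq_neg_self_iff.mp ?_
  conv_lhs => rw [dotProduct_mulVec, ← mulVec_transpose, hA, neg_mulVec, neg_dotProduct,
    dotProduct_comm]

theorem dotProduct_mul_mulVec_of_mulVec_eq_smul [CommSemiring R] {H : Matrix n n R} (hH : Hᵀ = H)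
    (L : Matrix n n R) {v : n → R} {t : R} (hv : H *ᵥ v = t • v) :
    v ⬝ᵥ (H * L) *ᵥ v = t * (v ⬝ᵥ L *ᵥ v) := by
  rw [← mulVec_mulVec, dotProduct_mulVec, ← mulVec_transpose, hH, hv, smul_dotProduct,
    smul_eq_mul]

/-- Since `v ⬝ᵥ (H * L) *ᵥ v = t * (v ⬝ᵥ L *ᵥ v)` vanishes by skew-symmetry, `L` contributes
nothing to `v ⬝ᵥ (H + L) *ᵥ v = t * (v ⬝ᵥ v)`. -/
theorem pos_of_mulVec_eq_smul_of_dotProduct_add_mulVec_pos [Field R] [LinearOrder R]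
    [IsStrictOrderedRing R] {H L : Matrix n n R} (hH : Hᵀ = H) (hHL : (H * L)ᵀ = -(H * L))
    {v : n → R} {t : R} (ht : t ≠ 0) (hv : H *ᵥ v = t • v)
    (hpos : 0 < v ⬝ᵥ (H + L) *ᵥ v) : 0 < t := by
  have hLv : v ⬝ᵥ L *ᵥ v = 0 := by
    have := dotProduct_mul_mulVec_of_mulVec_eq_smul hH L hv
    rw [dotProduct_mulVec_self_eq_zero_of_transpose_eq_neg hHL] at this
    exact (mul_eq_zero.mp this.symm).resolve_left ht
  rw [add_mulVec, dotProduct_add, hLv, hv, dotProduct_smul, smul_eq_mul, add_zero] at hpos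
  exact pos_of_mul_pos_left hpos (Fintype.sum_nonneg fun i => mul_self_nonneg (v i))

end Matrix

theorem stmt_7 (d : ℕ) (H L : Matrix (Fin d) (Fin d) ℝ)
    (hH : H.IsHermitian) (hHinv : IsUnit H.det)
    (hHL : (H * L)ᵀ = -(H * L))
    (hpd : ∀ x : Fin d → ℝ, x ≠ 0 → 0 < x ⬝ᵥ (H + L).mulVec x) :
    H.PosDef := by
  refine hH.posDef_iff_eigenvalues_pos.mpr fun i => ?_
  have hv0 : ⇑(hH.eigenvectorBasis i) ≠ 0 := fun h =>
    hH.eigenvectorBasis.orthonormal.ne_zero i (by ext j; exact congrFun h j)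
  have hne : hH.eigenvalues i ≠ 0 := by
    rw [hH.det_eq_prod_eigenvalues, isUnit_iff_ne_zero, Finset.prod_ne_zero_iff] at hHinv
    exact_mod_cast hHinv i (Finset.mem_univ i)
  exact pos_of_mulVec_eq_smul_of_dotProduct_add_mulVec_pos hH hHL hne
    (hH.mulVec_eigenvectorBasis i) (hpd _ hv0)
end

section
/- Let H be real symmetric invertible with HL skew-symmetric for a real matrix L, and let v be a unit eigenvector of H - Lᵀ with eigenvalue -μ, μ > 0. Then v·H⁻¹v = -1/μ. -/
open Matrix

theorem stmt_10 (d : ℕ) (H L : Matrix (Fin d) (Fin d) ℝ)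
    (hH : H.IsHermitian) (hHinv : IsUnit H.det)
    (hHL : (H * L)ᵀ = -(H * L))
    (μ : ℝ) (hμ : 0 < μ)
    (v : Fin d → ℝ) (hv : v ⬝ᵥ v = 1)
    (heig : (H - Lᵀ).mulVec v = (-μ) • v) :
    v ⬝ᵥ H⁻¹.mulVec v = -1 / μ := by
  have hHH : Hᵀ = H := hH
  have hHinv' : H⁻¹ * H = 1 := nonsing_inv_mul H hHinv
  have hHinv'' : H * H⁻¹ = 1 := mul_nonsing_inv H hHinv
  set S := H⁻¹ * Lᵀ with hS
  have hLtH : Lᵀ * H = -(H * L) := by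
    calc Lᵀ * H = Lᵀ * Hᵀ := by rw [hHH]
    _ = (H * L)ᵀ := (transpose_mul H L).symm
    _ = -(H * L) := hHL
  have h1 : H⁻¹ * (Lᵀ * H) * H⁻¹ = -(L * H⁻¹) := by
    rw [hLtH]
    simp [Matrix.mul_assoc, hHinv'', ← Matrix.mul_assoc, hHinv']
  have h2 : H⁻¹ * (Lᵀ * H) * H⁻¹ = S := by
    rw [hS, Matrix.mul_assoc, Matrix.mul_assoc, hHinv'', Matrix.mul_one]
  have h3 : S = -(L * H⁻¹) := h2.symm.trans h1
  have hSskew : Sᵀ = -S := by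
    rw [hS, transpose_mul, transpose_transpose, transpose_nonsing_inv, hHH,
      ← hS, h3, neg_neg]
  have hquad : v ⬝ᵥ S.mulVec v = 0 := by
    have h4 : v ⬝ᵥ S.mulVec v = -(v ⬝ᵥ S.mulVec v) := by
      conv_lhs => rw [dotProduct_mulVec, ← mulVec_transpose, hSskew, neg_mulVec,
        neg_dotProduct, dotProduct_comm]
    linarith
  have hM : H⁻¹ * (H - Lᵀ) = 1 - S := by rw [Matrix.mul_sub, hHinv', hS]
  have key : v - S.mulVec v = (-μ) • H⁻¹.mulVec v := by
    calc v - S.mulVec v = (1 - S).mulVec v := by rw [sub_mulVec, one_mulVec]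
    _ = (H⁻¹ * (H - Lᵀ)).mulVec v := by rw [hM]
    _ = H⁻¹.mulVec ((H - Lᵀ).mulVec v) := by rw [← mulVec_mulVec]
    _ = (-μ) • H⁻¹.mulVec v := by rw [heig, mulVec_smul]
  have key2 : v ⬝ᵥ (v - S.mulVec v) = (-μ) * (v ⬝ᵥ H⁻¹.mulVec v) := by
    rw [key, dotProduct_smul, smul_eq_mul]
  rw [dotProduct_sub, hv, hquad, sub_zero] at key2
  rw [eq_div_iff hμ.ne']
  linarith
end

section
/- Let H be a real symmetric invertible d×d matrix with exactly one negative eigenvalue, and let v be a unit vector with v·H⁻¹v = -1/μ for some μ > 0. Then H + μ v⊗v is symmetric positive semidefinite with det(H + μ v⊗v) = 0, and its kernel is the one-dimensional span of H⁻¹v. -/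
/-!
Put `w = H⁻¹ v`. Then `(H + μ v vᵀ) w = v + μ (v ⬝ w) v = 0`, and `(H + μ v vᵀ) x = 0` forces
`x = -μ (v ⬝ x) w`, so the kernel is the line through `w`.

For semidefiniteness: `H` is nonnegative on the hyperplane orthogonal to the eigenvector `u` of
its negative eigenvalue, hence so is `H + μ v vᵀ`. The vector `w` is not in that hyperplane, as
`w ⬝ H w = w ⬝ v = -1/μ < 0`. Since the symmetric matrix `H + μ v vᵀ` kills `w`, its quadratic
form is unchanged when a multiple of `w` is added to the argument, and every vector can be moved
into the hyperplane this way.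
-/

open Matrix

namespace Matrix

variable {n : Type*} [Fintype n]

theorem PosSemidef.of_mulVec_eq_zero_of_nonneg_on_hyperplane {M : Matrix n n ℝ}
    (hM : M.IsHermitian) {u w : n → ℝ}
    (hMw : M *ᵥ w = 0) (huw : u ⬝ᵥ w ≠ 0) (h : ∀ x, u ⬝ᵥ x = 0 → 0 ≤ x ⬝ᵥ M *ᵥ x) :
    M.PosSemidef := by
  refine PosSemidef.of_dotProduct_mulVec_nonneg hM fun x => ?_
  set z := x - ((u ⬝ᵥ x) / (u ⬝ᵥ w)) • w
  have huz : u ⬝ᵥ z = 0 := by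
    rw [dotProduct_sub, dotProduct_smul, smul_eq_mul, div_mul_cancel₀ _ huw, sub_self]
  have hwM : w ᵥ* M = 0 := by
    rw [← mulVec_transpose, ← conjTranspose_eq_transpose_of_trivial, hM.eq, hMw]
  have hMz : M *ᵥ z = M *ᵥ x := by rw [mulVec_sub, mulVec_smul, hMw, smul_zero, sub_zero]
  calc 0 ≤ z ⬝ᵥ M *ᵥ z := h z huz
    _ = star x ⬝ᵥ M *ᵥ x := by
      rw [hMz, sub_dotProduct, smul_dotProduct, dotProduct_mulVec w, hwM, zero_dotProduct,
        smul_zero, sub_zero, star_trivial]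

variable [DecidableEq n]

section RankOneUpdate

variable {K : Type*} [Field K] {A : Matrix n n K} {c : K} {u v : n → K}

theorem add_smul_vecMulVec_mulVec_inv_mulVec (hA : IsUnit A.det)
    (huv : c * (v ⬝ᵥ A⁻¹ *ᵥ u) = -1) :
    (A + c • vecMulVec u v) *ᵥ (A⁻¹ *ᵥ u) = 0 := by
  rw [add_mulVec, smul_mulVec, vecMulVec_mulVec, op_smul_eq_smul, smul_smul, huv,
    mulVec_mulVec, mul_nonsing_inv _ hA, one_mulVec, neg_one_smul, add_neg_cancel]

theorem ker_toLin'_add_smul_vecMulVec (hA : IsUnit A.det) (huv : c * (v ⬝ᵥ A⁻¹ *ᵥ u) = -1) :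
    LinearMap.ker (toLin' (A + c • vecMulVec u v)) = Submodule.span K {A⁻¹ *ᵥ u} := by
  ext x
  rw [LinearMap.mem_ker, toLin'_apply, Submodule.mem_span_singleton]
  constructor
  · intro hx
    refine ⟨-(c * (v ⬝ᵥ x)), ?_⟩
    have hAx : A *ᵥ x = -((c * (v ⬝ᵥ x)) • u) := by
      rw [add_mulVec, smul_mulVec, vecMulVec_mulVec, op_smul_eq_smul, smul_smul] at hx
      exact eq_neg_of_add_eq_zero_left hx
    calc -(c * (v ⬝ᵥ x)) • A⁻¹ *ᵥ u = A⁻¹ *ᵥ (A *ᵥ x) := by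
          rw [hAx, mulVec_neg, mulVec_smul, neg_smul]
      _ = x := by rw [mulVec_mulVec, nonsing_inv_mul _ hA, one_mulVec]
  · rintro ⟨a, rfl⟩
    rw [mulVec_smul, add_smul_vecMulVec_mulVec_inv_mulVec hA huv, smul_zero]

end RankOneUpdate

theorem IsHermitian.dotProduct_mulVec_eq_sum_eigenvalues {H : Matrix n n ℝ} (hH : H.IsHermitian)
    (x : n → ℝ) :
    x ⬝ᵥ H *ᵥ x = ∑ i, hH.eigenvalues i *
      ((star (hH.eigenvectorUnitary : Matrix n n ℝ)) *ᵥ x) i ^ 2 := by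
  conv_lhs => rw [hH.spectral_theorem, Unitary.conjStarAlgAut_apply]
  rw [← mulVec_mulVec, ← mulVec_mulVec, dotProduct_mulVec, star_eq_conjTranspose,
    conjTranspose_eq_transpose_of_trivial, ← mulVec_transpose]
  simp only [dotProduct, mulVec_diagonal, Function.comp_apply, RCLike.ofReal_real_eq_id, id_eq]
  exact Finset.sum_congr rfl fun i _ => by ring

theorem IsHermitian.exists_nonneg_on_hyperplane {H : Matrix n n ℝ}
    (hH : H.IsHermitian) {i₀ : n} (hnonneg : ∀ i ≠ i₀, 0 ≤ hH.eigenvalues i) :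
    ∃ u : n → ℝ, ∀ x, u ⬝ᵥ x = 0 → 0 ≤ x ⬝ᵥ H *ᵥ x := by
  -- `u` is the eigenvector belonging to `hH.eigenvalues i₀`.
  refine ⟨(star (hH.eigenvectorUnitary : Matrix n n ℝ)) i₀, fun x hx => ?_⟩
  rw [hH.dotProduct_mulVec_eq_sum_eigenvalues]
  refine Finset.sum_nonneg fun i _ => ?_
  rcases eq_or_ne i i₀ with rfl | hi
  · rw [show (star (hH.eigenvectorUnitary : Matrix n n ℝ) *ᵥ x) i = 0 from hx]
    simp
  · exact mul_nonneg (hnonneg i hi) (sq_nonneg _)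

end Matrix

theorem stmt_12_general (d : ℕ) (H : Matrix (Fin d) (Fin d) ℝ)
    (hH : H.IsHermitian) (hHinv : IsUnit H.det)
    (hHneg : (Finset.univ.filter (fun i => hH.eigenvalues i < 0)).card = 1)
    (μ : ℝ) (hμ : 0 < μ)
    (v : Fin d → ℝ)
    (hvH : v ⬝ᵥ H⁻¹.mulVec v = -1 / μ) :
    (H + μ • vecMulVec v v).PosSemidef ∧
    (H + μ • vecMulVec v v).det = 0 ∧
    LinearMap.ker (Matrix.toLin' (H + μ • vecMulVec v v)) =
      Submodule.span ℝ {H⁻¹.mulVec v} ∧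
    Module.finrank ℝ (LinearMap.ker (Matrix.toLin' (H + μ • vecMulVec v v))) = 1 := by
  have hμv : μ * (v ⬝ᵥ H⁻¹ *ᵥ v) = -1 := by rw [hvH]; field_simp
  have hMw := add_smul_vecMulVec_mulVec_inv_mulVec hHinv hμv
  have hker := ker_toLin'_add_smul_vecMulVec hHinv hμv
  have hw : H⁻¹ *ᵥ v ≠ 0 := fun h => by simp [h] at hμv
  obtain ⟨i₀, hi₀⟩ := Finset.card_eq_one.mp hHneg
  have hnonneg : ∀ i ≠ i₀, 0 ≤ hH.eigenvalues i := fun i hi => not_lt.mp fun hneg =>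
    hi (Finset.mem_singleton.mp (hi₀ ▸ Finset.mem_filter.mpr ⟨Finset.mem_univ i, hneg⟩))
  obtain ⟨u, hu⟩ := hH.exists_nonneg_on_hyperplane hnonneg
  have hP : (μ • vecMulVec v v).PosSemidef := by
    simpa using (posSemidef_vecMulVec_self_star v).smul hμ.le
  have huw : u ⬝ᵥ H⁻¹ *ᵥ v ≠ 0 := fun h => by
    have := hu _ h
    rw [mulVec_mulVec, mul_nonsing_inv _ hHinv, one_mulVec, dotProduct_comm, hvH] at this
    exact (div_neg_of_neg_of_pos neg_one_lt_zero hμ).not_ge this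
  have hPSD : (H + μ • vecMulVec v v).PosSemidef := by
    refine PosSemidef.of_mulVec_eq_zero_of_nonneg_on_hyperplane (hH.add hP.isHermitian) hMw huw
      fun x hx => ?_
    rw [add_mulVec, dotProduct_add]
    simpa using add_nonneg (hu x hx) (hP.dotProduct_mulVec_nonneg x)
  refine ⟨hPSD, exists_mulVec_eq_zero_iff.mp ⟨_, hw, hMw⟩, hker, ?_⟩
  rw [hker, finrank_span_singleton hw]

theorem stmt_12 (d : ℕ) (H : Matrix (Fin d) (Fin d) ℝ)
    (hH : H.IsHermitian) (hHinv : IsUnit H.det)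
    (hHneg : (Finset.univ.filter (fun i => hH.eigenvalues i < 0)).card = 1)
    (μ : ℝ) (hμ : 0 < μ)
    (v : Fin d → ℝ) (hv : v ⬝ᵥ v = 1)
    (hvH : v ⬝ᵥ H⁻¹.mulVec v = -1 / μ) :
    (H + μ • vecMulVec v v).PosSemidef ∧
    (H + μ • vecMulVec v v).det = 0 ∧
    LinearMap.ker (Matrix.toLin' (H + μ • vecMulVec v v)) =
      Submodule.span ℝ {H⁻¹.mulVec v} ∧
    Module.finrank ℝ (LinearMap.ker (Matrix.toLin' (H + μ • vecMulVec v v))) = 1 :=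
  stmt_12_general d H hH hHinv hHneg μ hμ v hvH
end

section
/- Let H = diag(-λ₁, λ₂, ..., λ_d) with λ₁,...,λ_d > 0, and let v ∈ ℝᵈ be a unit vector with v₁ > 0 satisfying λ₁·∑_{k≥2} v_k²/λ_k < v₁². Then there exists ε₀ ∈ (0, v₁) such that for every x ∈ ℝᵈ with x₁ = 1, either x·v ≥ ε₀ or ∑_{k≥2} λ_k x_k² ≥ λ₁ + ε₀. -/
theorem stmt_15 (d : ℕ) (lam : Fin (d + 1) → ℝ) (hlam : ∀ i, 0 < lam i)
    (v : Fin (d + 1) → ℝ) (hunit : ∑ i, v i ^ 2 = 1) (hv1 : 0 < v 0)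
    (hCS : lam 0 * ∑ k ∈ Finset.univ.erase 0, v k ^ 2 / lam k < v 0 ^ 2) :
    ∃ ε₀ ∈ Set.Ioo 0 (v 0), ∀ x : Fin (d + 1) → ℝ, x 0 = 1 →
      ε₀ ≤ ∑ i, x i * v i ∨
      lam 0 + ε₀ ≤ ∑ k ∈ Finset.univ.erase 0, lam k * x k ^ 2 := by
  set E := Finset.univ.erase (0 : Fin (d + 1)) with hE
  set S := ∑ k ∈ E, v k ^ 2 / lam k with hSdef
  have hS : 0 ≤ S := Finset.sum_nonneg fun k _ =>
    div_nonneg (sq_nonneg _) (hlam k).le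
  have hδ : 0 < v 0 ^ 2 - lam 0 * S := by linarith
  have hden : 0 < S + 2 * v 0 := by linarith
  set ε₀ := min (v 0 / 2) ((v 0 ^ 2 - lam 0 * S) / (S + 2 * v 0)) with hε₀def
  have hε₀pos : 0 < ε₀ := lt_min (by linarith) (div_pos hδ hden)
  have hε₀lt : ε₀ < v 0 := lt_of_le_of_lt (min_le_left _ _) (by linarith)
  have hkey : (lam 0 + ε₀) * S ≤ (v 0 - ε₀) ^ 2 := by
    have h1 : ε₀ ≤ (v 0 ^ 2 - lam 0 * S) / (S + 2 * v 0) := min_le_right _ _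
    have h2 : ε₀ * (S + 2 * v 0) ≤ v 0 ^ 2 - lam 0 * S :=
      (le_div_iff₀ hden).mp h1
    nlinarith [sq_nonneg ε₀]
  refine ⟨ε₀, ⟨hε₀pos, hε₀lt⟩, fun x hx => ?_⟩
  by_contra hcon
  push_neg at hcon
  obtain ⟨h1, h2⟩ := hcon
  have hsplit : ∑ i, x i * v i = v 0 + ∑ k ∈ E, x k * v k := by
    rw [hE, ← Finset.add_sum_erase Finset.univ (fun i => x i * v i)
      (Finset.mem_univ 0), hx, one_mul]
  set T := ∑ k ∈ E, x k * v k with hT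
  have hTneg : T < ε₀ - v 0 := by rw [hsplit] at h1; linarith
  -- Cauchy-Schwarz
  have hcs : T ^ 2 ≤ (∑ k ∈ E, lam k * x k ^ 2) * S := by
    have := Finset.sum_mul_sq_le_sq_mul_sq E
      (fun k => Real.sqrt (lam k) * x k) (fun k => v k / Real.sqrt (lam k))
    have heq1 : ∀ k ∈ E, (Real.sqrt (lam k) * x k) * (v k / Real.sqrt (lam k))
        = x k * v k := by
      intro k _
      have hs : Real.sqrt (lam k) ≠ 0 := ne_of_gt (Real.sqrt_pos.mpr (hlam k))
      field_simp
    have heq2 : ∀ k ∈ E, (Real.sqrt (lam k) * x k) ^ 2 = lam k * x k ^ 2 := by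
      intro k _
      rw [mul_pow, Real.sq_sqrt (hlam k).le]
    have heq3 : ∀ k ∈ E, (v k / Real.sqrt (lam k)) ^ 2 = v k ^ 2 / lam k := by
      intro k _
      rw [div_pow, Real.sq_sqrt (hlam k).le]
    rw [Finset.sum_congr rfl heq1, Finset.sum_congr rfl heq2,
      Finset.sum_congr rfl heq3] at this
    exact this
  have hA : 0 ≤ ∑ k ∈ E, lam k * x k ^ 2 :=
    Finset.sum_nonneg fun k _ => mul_nonneg (hlam k).le (sq_nonneg _)
  have hAS : (∑ k ∈ E, lam k * x k ^ 2) * S ≤ (lam 0 + ε₀) * S :=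
    mul_le_mul_of_nonneg_right h2.le hS
  nlinarith [sq_nonneg (T + (v 0 - ε₀))]
end

section
/- Let H be a real symmetric invertible matrix with exactly one negative eigenvalue -λ₁ and positive eigenvalues λ₂,...,λ_d, let v be a unit vector with Hv-related data as follows: v·H⁻¹v = -1/μ with μ > 0. In the eigenbasis of H, writing ṽ = (v₂,...,v_d) and H̃ = diag(λ₂,...,λ_d), the (d-1)×(d-1) matrix H̃ + μ ṽ⊗ṽ is positive definite and det(H̃ + μ ṽ⊗ṽ) = μ·(v₁²/λ₁)·∏_{k=2}^d λ_k. -/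
/-!
H̃ + μ ṽṽᵀ is a positive diagonal matrix plus a positive semidefinite rank-one term. By the matrix
determinant lemma its determinant is (1 + μ ṽᵀH̃⁻¹ṽ) ∏ λ_k, and the constraint vᵀH⁻¹v = -1/μ,
i.e. ṽᵀH̃⁻¹ṽ = v₁²/λ₁ - 1/μ, turns the first factor into μ v₁²/λ₁.
-/

open Matrix

namespace Matrix

variable {n K : Type*} [Fintype n] [DecidableEq n] [Field K]

theorem inv_diagonal_of_ne_zero {lam : n → K} (hlam : ∀ k, lam k ≠ 0) :
    (diagonal lam)⁻¹ = diagonal fun k => (lam k)⁻¹ :=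
  inv_eq_right_inv <| by simp [diagonal_mul_diagonal, hlam]

theorem det_diagonal_add_vecMulVec {lam : n → K} (hlam : ∀ k, lam k ≠ 0) (u w : n → K) :
    (diagonal lam + vecMulVec u w).det = (1 + ∑ k, w k * u k / lam k) * ∏ k, lam k := by
  have hdet : IsUnit (diagonal lam).det := by
    simpa [det_diagonal] using Finset.prod_ne_zero_iff.mpr fun k _ => hlam k
  rw [vecMulVec_eq Unit, det_add_replicateCol_mul_replicateRow hdet, det_diagonal, mul_comm,
    inv_diagonal_of_ne_zero hlam]
  simp [det_unique, Matrix.mul_apply, diagonal_apply, div_eq_mul_inv, mul_comm, mul_assoc]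

omit [DecidableEq n] in
theorem PosDef.add_smul_vecMulVec_self {A : Matrix n n ℝ} (hA : A.PosDef) {μ : ℝ} (hμ : 0 ≤ μ)
    (v : n → ℝ) : (A + μ • vecMulVec v v).PosDef :=
  hA.add_posSemidef ((posSemidef_vecMulVec_self_star v).smul hμ)

end Matrix

theorem stmt_16_general (d : ℕ) (lam₁ : ℝ)
    (lam : Fin d → ℝ) (hlam : ∀ k, 0 < lam k)
    (μ : ℝ) (hμ : 0 < μ)
    (v₁ : ℝ) (v : Fin d → ℝ)
    (hvH : -(v₁ ^ 2) / lam₁ + ∑ k, v k ^ 2 / lam k = -1 / μ) :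
    (Matrix.diagonal lam + μ • vecMulVec v v).PosDef ∧
    (Matrix.diagonal lam + μ • vecMulVec v v).det =
      μ * (v₁ ^ 2 / lam₁) * ∏ k, lam k := by
  refine ⟨(PosDef.diagonal hlam).add_smul_vecMulVec_self hμ.le v, ?_⟩
  have hsum : ∑ k, v k * (μ • v) k / lam k = μ * ∑ k, v k ^ 2 / lam k := by
    rw [Finset.mul_sum]
    exact Finset.sum_congr rfl fun k _ => by simp only [Pi.smul_apply, smul_eq_mul]; ring
  rw [← smul_vecMulVec, det_diagonal_add_vecMulVec (fun k => (hlam k).ne'), hsum]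
  have hμS : μ * ∑ k, v k ^ 2 / lam k = μ * (v₁ ^ 2 / lam₁) - 1 := by
    field_simp at hvH
    linear_combination hvH
  rw [hμS]
  ring

theorem stmt_16 (d : ℕ) (lam₁ : ℝ) (hlam₁ : 0 < lam₁)
    (lam : Fin d → ℝ) (hlam : ∀ k, 0 < lam k)
    (μ : ℝ) (hμ : 0 < μ)
    (v₁ : ℝ) (v : Fin d → ℝ)
    (hunit : v₁ ^ 2 + ∑ k, v k ^ 2 = 1)
    (hvH : -(v₁ ^ 2) / lam₁ + ∑ k, v k ^ 2 / lam k = -1 / μ) :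
    (Matrix.diagonal lam + μ • vecMulVec v v).PosDef ∧
    (Matrix.diagonal lam + μ • vecMulVec v v).det =
      μ * (v₁ ^ 2 / lam₁) * ∏ k, lam k :=
  stmt_16_general d lam₁ lam hlam μ hμ v₁ v hvH
end
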